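/- Stein's Lemma for the Gamma distribution: let α > 0, β > 0, and X ~ Gamma(α, β) (shape α, scale β). Let h : (0,∞) → ℝ be continuously differentiable such that E[|X h(X)|] < ∞, E[|X h'(X)|] < ∞, and the boundary terms vanish: x^α e^{−x/β} h(x) → 0 as x → 0⁺ and as x → ∞. Then E[(X − αβ) h(X)] = β · E[X h'(X)]. -/

import Mathlib

open MeasureTheory ProbabilityTheory Real Set Filter Topology

/-!
Write `p = c x^(a-1) e^(-r x)` for the Gamma(a, r) density on `(0, ∞)` and `u x = x^a e^(-r x)`.
Then `x p = c u` and `(r x - a) p = -c u'`, so the identity is the integration by parts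
`∫₀^∞ (u' h + u h') = [u h]₀^∞ = 0`. The hypotheses only control `x h` and `x h'`; integrability
of `h` itself near `0` comes from `|h x| ≤ |h 1| + ∫ₓ¹ |h'|` and a second integration by parts,
against `x^a`, which bounds `∫_ε^1 x^(a-1) |h x|` by `(|h 1| + ∫₀¹ x^a |h' x|) / a`
uniformly in `ε`.
-/
lemma integrableOn_Ioc_rpow_sub_one_mul_of_nonneg {α : ℝ} (hα : 0 < α) {k k' : ℝ → ℝ}
    (hk : ∀ x ∈ Ioi (0 : ℝ), HasDerivAt k (k' x) x) (hk' : ContinuousOn k' (Ioi 0))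
    (hk0 : ∀ x ∈ Ioc (0 : ℝ) 1, 0 ≤ k x)
    (hint : IntegrableOn (fun x => x ^ α * k' x) (Ioc 0 1)) :
    IntegrableOn (fun x => x ^ (α - 1) * k x) (Ioc 0 1) := by
  have hpow : ∀ p : ℝ, ContinuousOn (fun x : ℝ => x ^ p) (Ioi 0) := fun p =>
    continuousOn_id.rpow_const fun x hx => Or.inl (ne_of_gt hx)
  have hcont : ContinuousOn (fun x => x ^ (α - 1) * k x) (Ioi 0) :=
    (hpow _).mul fun x hx => (hk x hx).continuousAt.continuousWithinAt
  set I := ∫ x in Ioc 0 1, ‖x ^ α * k' x‖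
  have hbound : ∀ ε ∈ Ioc (0 : ℝ) 1, ∫ x in Ioc ε 1, ‖x ^ (α - 1) * k x‖ ≤ (k 1 + I) / α := by
    rintro ε ⟨hε0, hε1⟩
    have hsub : uIcc ε 1 ⊆ Ioi 0 := by
      rw [uIcc_of_le hε1]; exact fun x hx => hε0.trans_le hx.1
    have hibp := intervalIntegral.integral_mul_deriv_eq_deriv_mul
      (fun x hx => hasDerivAt_rpow_const (p := α) (Or.inl (ne_of_gt (hsub hx))))
      (fun x hx => hk x (hsub hx))
      (((hpow _).const_smul α).mono hsub |>.intervalIntegrable)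
      ((hk'.mono hsub).intervalIntegrable)
    have hk'_le : -∫ x in ε..1, x ^ α * k' x ≤ I := by
      refine (neg_le_abs _).trans ((intervalIntegral.abs_integral_le_integral_abs hε1).trans ?_)
      rw [intervalIntegral.integral_of_le hε1]
      exact setIntegral_mono_set hint.norm (ae_of_all _ fun _ => abs_nonneg _)
        (Ioc_subset_Ioc_left hε0.le).eventuallyLE
    have hkε : 0 ≤ ε ^ α * k ε := mul_nonneg (rpow_nonneg hε0.le _) (hk0 ε ⟨hε0, hε1⟩)
    rw [le_div_iff₀ hα, ← intervalIntegral.integral_of_le hε1]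
    calc (∫ x in ε..1, ‖x ^ (α - 1) * k x‖) * α
        = ∫ x in ε..1, α * x ^ (α - 1) * k x := by
          rw [mul_comm, ← intervalIntegral.integral_const_mul]
          refine intervalIntegral.integral_congr fun x hx => ?_
          rw [uIcc_of_le hε1] at hx
          rw [norm_of_nonneg (mul_nonneg (rpow_nonneg (hε0.le.trans hx.1) _)
            (hk0 x ⟨hε0.trans_le hx.1, hx.2⟩)), mul_assoc]
      _ = k 1 - ε ^ α * k ε - ∫ x in ε..1, x ^ α * k' x := by
          rw [hibp, one_rpow, one_mul]; ring
      _ ≤ k 1 + I := by linarith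
  refine integrableOn_Ioc_of_intervalIntegral_norm_bounded_left
    (a := fun n : ℕ => 1 / ((n : ℝ) + 1)) (fun n => ?_) tendsto_one_div_add_atTop_nhds_zero_nat
    (Eventually.of_forall fun n => hbound _ ⟨by positivity, ?_⟩)
  · refine ((hcont.mono fun x hx => ?_).integrableOn_Icc).mono_set Ioc_subset_Icc_self
    exact (show (0 : ℝ) < 1 / ((n : ℝ) + 1) by positivity).trans_le hx.1
  · rw [div_le_one (by positivity)]; simp

lemma integrableOn_Ioc_rpow_sub_one_mul {α : ℝ} (hα : 0 < α) {h h' : ℝ → ℝ}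
    (hdiff : ∀ x ∈ Ioi (0 : ℝ), HasDerivAt h (h' x) x) (hcont : ContinuousOn h' (Ioi 0))
    (hint : IntegrableOn (fun x => x ^ α * h' x) (Ioc 0 1)) :
    IntegrableOn (fun x => x ^ (α - 1) * h x) (Ioc 0 1) := by
  have hsub : ∀ x ∈ Ioi (0 : ℝ), uIcc x 1 ⊆ Ioi 0 := fun x hx t ht =>
    (lt_min hx one_pos).trans_le ht.1
  set k : ℝ → ℝ := fun x => |h 1| + ∫ t in x..1, |h' t|
  have hk : ∀ x ∈ Ioi (0 : ℝ), HasDerivAt k (-|h' x|) x := fun x hx =>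
    (intervalIntegral.integral_hasDerivAt_left (hcont.abs.mono (hsub x hx)).intervalIntegrable
      (hcont.abs.stronglyMeasurableAtFilter isOpen_Ioi x hx)
      (hcont.abs.continuousAt (Ioi_mem_nhds hx))).const_add _
  have habs_le : ∀ x ∈ Ioc (0 : ℝ) 1, |h x| ≤ k x := by
    rintro x ⟨hx0, hx1⟩
    have hftc := intervalIntegral.integral_eq_sub_of_hasDerivAt
      (fun t ht => hdiff t (hsub x hx0 ht)) (hcont.mono (hsub x hx0)).intervalIntegrable
    have := intervalIntegral.abs_integral_le_integral_abs (f := h') (μ := volume) hx1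
    rw [hftc] at this
    simp only [k]
    linarith [abs_sub_abs_le_abs_sub (h x) (h 1), abs_sub_comm (h 1) (h x)]
  have hkint := integrableOn_Ioc_rpow_sub_one_mul_of_nonneg hα hk hcont.abs.neg
    (fun x hx => (abs_nonneg _).trans (habs_le x hx))
    (IntegrableOn.congr_fun hint.norm.neg (fun x hx => by
      simp [norm_mul, abs_of_pos (rpow_pos_of_pos hx.1 α)]) measurableSet_Ioc)
  refine hkint.mono' ?_ ((ae_restrict_iff' measurableSet_Ioc).mpr (ae_of_all _ fun x hx => ?_))
  · refine ContinuousOn.aestronglyMeasurable ?_ measurableSet_Ioc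
    exact ((continuousOn_id.rpow_const fun x hx => Or.inl (ne_of_gt hx.1)).mul
      fun x hx => (hdiff x hx.1).continuousAt.continuousWithinAt)
  · rw [norm_mul, norm_of_nonneg (rpow_nonneg hx.1.le _)]
    exact mul_le_mul_of_nonneg_left (habs_le x hx) (rpow_nonneg hx.1.le _)

lemma measurable_gammaPDF (a r : ℝ) : Measurable (gammaPDF a r) :=
  (measurable_gammaPDFReal a r).ennreal_ofReal

lemma gammaPDFReal_of_nonneg {a r x : ℝ} (hx : 0 ≤ x) :
    gammaPDFReal a r x = r ^ a / Gamma a * x ^ (a - 1) * exp (-(r * x)) :=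
  if_pos hx

lemma integral_gammaMeasure {a r : ℝ} (ha : 0 < a) (hr : 0 < r) (f : ℝ → ℝ) :
    ∫ x, f x ∂gammaMeasure a r = ∫ x in Ioi 0, gammaPDFReal a r x * f x := by
  rw [gammaMeasure, integral_withDensity_eq_integral_toReal_smul
    (measurable_gammaPDF a r) (ae_of_all _ fun _ => ENNReal.ofReal_lt_top),
    ← integral_Ici_eq_integral_Ioi, setIntegral_eq_integral_of_forall_compl_eq_zero]
  · simp [gammaPDF, ENNReal.toReal_ofReal (gammaPDFReal_nonneg ha hr _)]
  · intro x hx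
    simp [gammaPDFReal, if_neg (by simpa using hx : ¬ 0 ≤ x)]

lemma integrable_gammaMeasure_iff {a r : ℝ} (ha : 0 < a) (hr : 0 < r) {f : ℝ → ℝ} :
    Integrable f (gammaMeasure a r) ↔ IntegrableOn (fun x => gammaPDFReal a r x * f x) (Ioi 0) := by
  rw [gammaMeasure, integrable_withDensity_iff (measurable_gammaPDF a r)
    (ae_of_all _ fun _ => ENNReal.ofReal_lt_top), ← integrableOn_Ici_iff_integrableOn_Ioi,
    integrableOn_iff_integrable_of_support_subset]
  · simp_rw [gammaPDF, ENNReal.toReal_ofReal (gammaPDFReal_nonneg ha hr _), mul_comm]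
  · intro x hx
    by_contra hx0
    simp [gammaPDFReal, if_neg (by simpa using hx0 : ¬ 0 ≤ x)] at hx

lemma integrable_gammaMeasure_of_hasDerivAt {a r : ℝ} (ha : 0 < a) (hr : 0 < r) {h h' : ℝ → ℝ}
    (hdiff : ∀ x ∈ Ioi (0 : ℝ), HasDerivAt h (h' x) x) (hcont : ContinuousOn h' (Ioi 0))
    (hxh : Integrable (fun x => x * h x) (gammaMeasure a r))
    (hxh' : Integrable (fun x => x * h' x) (gammaMeasure a r)) :
    Integrable h (gammaMeasure a r) := by
  rw [integrable_gammaMeasure_iff ha hr] at hxh hxh' ⊢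
  set c := r ^ a / Gamma a
  have hpow : ∀ x ∈ Ioi (0 : ℝ), x ^ a = x ^ (a - 1) * x := fun x hx => by
    rw [rpow_sub_one (ne_of_gt hx), div_mul_cancel₀ _ (ne_of_gt hx)]
  rw [← Ioc_union_Ioi_eq_Ioi zero_le_one]
  refine IntegrableOn.union ?_ ?_
  · -- near `0` the density is comparable to `x ^ (a - 1)`
    have hderiv : IntegrableOn (fun x => x ^ a * h' x) (Ioc 0 1) := by
      refine IntegrableOn.congr_fun ((hxh'.mono_set Ioc_subset_Ioi_self).continuousOn_mul_of_subset
        (g := fun x => exp (r * x) / c) (by fun_prop) isCompact_Icc measurableSet_Ioc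
        Ioc_subset_Icc_self) (fun x hx => ?_) measurableSet_Ioc
      rw [gammaPDFReal_of_nonneg hx.1.le, hpow x hx.1, mul_comm r x, exp_neg]
      simp only [c]
      field_simp
    refine IntegrableOn.congr_fun ((integrableOn_Ioc_rpow_sub_one_mul ha hdiff hcont
      hderiv).continuousOn_mul_of_subset (g := fun x => c * exp (-(r * x))) (by fun_prop)
      isCompact_Icc measurableSet_Ioc Ioc_subset_Icc_self) (fun x hx => ?_) measurableSet_Ioc
    rw [gammaPDFReal_of_nonneg hx.1.le]
    ring
  · refine Integrable.mono (hxh.mono_set (Ioi_subset_Ioi zero_le_one)) ?_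
      ((ae_restrict_iff' measurableSet_Ioi).mpr (ae_of_all _ fun x hx => ?_))
    · have hh : ContinuousOn h (Ioi 1) := fun x hx =>
        (hdiff x (Ioi_subset_Ioi zero_le_one hx)).continuousAt.continuousWithinAt
      exact (measurable_gammaPDFReal a r).aestronglyMeasurable.mul
        (hh.aestronglyMeasurable measurableSet_Ioi)
    · rw [norm_mul, norm_mul, norm_mul]
      gcongr
      exact le_mul_of_one_le_left (norm_nonneg _) (by simpa using (le_abs_self x).trans' hx.le)

lemma hasDerivAt_rpow_mul_exp_neg_mul {a r x : ℝ} (hx : 0 < x) :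
    HasDerivAt (fun x => x ^ a * exp (-(r * x)))
      ((a * x ^ (a - 1) - r * x ^ a) * exp (-(r * x))) x := by
  have hexp : HasDerivAt (fun x => exp (-(r * x))) (exp (-(r * x)) * -r) x := by
    simpa using ((hasDerivAt_id x).const_mul r).neg.exp
  exact ((hasDerivAt_rpow_const (p := a) (Or.inl (ne_of_gt hx))).mul hexp).congr_deriv (by ring)

theorem integral_gammaMeasure_mul_sub_mul_eq_integral_mul_deriv {a r : ℝ} (ha : 0 < a)
    (hr : 0 < r) {h h' : ℝ → ℝ} (hdiff : ∀ x ∈ Ioi (0 : ℝ), HasDerivAt h (h' x) x)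
    (hh : Integrable h (gammaMeasure a r))
    (hxh : Integrable (fun x => x * h x) (gammaMeasure a r))
    (hxh' : Integrable (fun x => x * h' x) (gammaMeasure a r))
    (hlim0 : Tendsto (fun x => x ^ a * exp (-(r * x)) * h x) (𝓝[>] 0) (𝓝 0))
    (hlimtop : Tendsto (fun x => x ^ a * exp (-(r * x)) * h x) atTop (𝓝 0)) :
    ∫ x, (r * x - a) * h x ∂gammaMeasure a r = ∫ x, x * h' x ∂gammaMeasure a r := by
  set u : ℝ → ℝ := fun x => x ^ a * exp (-(r * x))
  set u' : ℝ → ℝ := fun x => (a * x ^ (a - 1) - r * x ^ a) * exp (-(r * x))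
  set c := r ^ a / Gamma a
  have hc : c ≠ 0 := (div_pos (rpow_pos_of_pos hr a) (Gamma_pos_of_pos ha)).ne'
  have hdensity : ∀ x ∈ Ioi (0 : ℝ), gammaPDFReal a r x * ((r * x - a) * h x - x * h' x)
      = -c * (u' x * h x + u x * h' x) := fun x hx => by
    have hx0 : x ≠ 0 := ne_of_gt hx
    simp only [gammaPDFReal_of_nonneg hx.out.le, u, u', c, rpow_sub_one hx0]
    field_simp
    ring
  have hlin : Integrable (fun x => (r * x - a) * h x) (gammaMeasure a r) :=
    (hxh.const_mul r).sub (hh.const_mul a) |>.congr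
      (ae_of_all _ fun x => by simp only [Pi.sub_apply]; ring)
  have hibp : ∫ x in Ioi 0, u' x * h x + u x * h' x = 0 := by
    have hint' : IntegrableOn (fun x => u' x * h x + u x * h' x) (Ioi 0) :=
      IntegrableOn.congr_fun
        (((integrable_gammaMeasure_iff ha hr).mp (hlin.sub hxh')).const_mul (-c)⁻¹)
        (fun x hx => by rw [Pi.sub_apply, hdensity x hx, ← mul_assoc, inv_mul_cancel₀ (neg_ne_zero.mpr hc),
          one_mul]) measurableSet_Ioi
    simpa using integral_Ioi_deriv_mul_eq_sub (fun x hx => hasDerivAt_rpow_mul_exp_neg_mul hx)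
      hdiff hint' hlim0 hlimtop
  rw [← sub_eq_zero, ← integral_sub hlin hxh', integral_gammaMeasure ha hr, setIntegral_congr_fun measurableSet_Ioi hdensity,
    integral_const_mul, hibp, mul_zero]

/-- Stein's lemma for the Gamma distribution. Let `X ~ Gamma(α, β)` (shape `α`,
scale `β`, i.e. rate `1/β`), and let `h` be continuously differentiable on `(0,∞)` with
`E[|X h(X)|] < ∞`, `E[|X h'(X)|] < ∞` and vanishing boundary terms
`x^α e^{−x/β} h(x) → 0` as `x → 0⁺` and `x → ∞`. Then `E[(X − αβ)h(X)] = β E[X h'(X)]`. -/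
theorem stmt_3 (α β : ℝ) (hα : 0 < α) (hβ : 0 < β) (h h' : ℝ → ℝ)
    (hdiff : ∀ x ∈ Ioi (0 : ℝ), HasDerivAt h (h' x) x)
    (hcont : ContinuousOn h' (Ioi 0))
    (hint1 : Integrable (fun x => x * h x) (gammaMeasure α (1 / β)))
    (hint2 : Integrable (fun x => x * h' x) (gammaMeasure α (1 / β)))
    (hlim0 : Filter.Tendsto (fun x => x ^ α * Real.exp (-x / β) * h x)
      (nhdsWithin 0 (Ioi 0)) (nhds 0))
    (hlimtop : Filter.Tendsto (fun x => x ^ α * Real.exp (-x / β) * h x)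
      Filter.atTop (nhds 0)) :
    ∫ x, (x - α * β) * h x ∂(gammaMeasure α (1 / β))
      = β * ∫ x, x * h' x ∂(gammaMeasure α (1 / β)) := by
  have hr : 0 < 1 / β := by positivity
  simp_rw [show ∀ x : ℝ, -x / β = -(1 / β * x) from fun x => by ring] at hlim0 hlimtop
  rw [← integral_gammaMeasure_mul_sub_mul_eq_integral_mul_deriv hα hr hdiff
    (integrable_gammaMeasure_of_hasDerivAt hα hr hdiff hcont hint1 hint2) hint1 hint2
    hlim0 hlimtop, ← integral_const_mul]
  congr with x
  field_simp
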